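/- Under the Lipschitz-exact approximation hypotheses, for every Lipschitz curve c : [0,1] → U one has ∫₀¹ ⟨P(c(t)), (Q∘c)'(t)⟩ dt = S(c(1)) − S(c(0)), where (Q∘c)' denotes the almost-everywhere defined derivative of the Lipschitz map Q∘c : [0,1] → ℝⁿ. In other words, the line integral of the Liouville form θ along ι∘c equals S(c(1)) − S(c(0)). -/

import Mathlib

open scoped RealInnerProductSpace NNReal
open MeasureTheory Filter

/-!
For each `k`, the chain rule and `ι_k^* θ = dS_k` give `⟪P_k (c t), (Q_k ∘ c)' t⟫ = (S_k ∘ c)' t`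
almost everywhere, so the line integral along `ι_k ∘ c` is `S_k (c 1) - S_k (c 0)` by the
fundamental theorem of calculus for the Lipschitz function `S_k ∘ c`.

The right-hand sides converge to `S (c 1) - S (c 0)`. On the left, `(Q_k ∘ c)'` only converges
weakly, but that suffices: in `⟪P_k, Q_k'⟫ = ⟪P_k - P, Q_k'⟫ + ⟪P, Q_k'⟫` the first term is
uniformly small because the `Q_k'` are bounded by the common Lipschitz constant, and integrating
the second by parts moves the derivative onto the fixed Lipschitz curve `P ∘ c`, after which
uniform convergence of `Q_k ∘ c` applies.
-/

open Set Topology Interval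

theorem LipschitzOnWith.of_tendsto {ι α β : Type*} [PseudoEMetricSpace α] [PseudoEMetricSpace β]
    {l : Filter ι} [l.NeBot] {K : ℝ≥0} {s : Set α} {F : ι → α → β} {f : α → β}
    (hF : ∀ k, LipschitzOnWith K (F k) s) (h : ∀ x ∈ s, Tendsto (fun k => F k x) l (𝓝 (f x))) :
    LipschitzOnWith K f s := by
  rw [lipschitzOnWith_iff_restrict]
  exact (isClosed_setOfPred_lipschitzWith K).mem_of_tendsto
    (tendsto_pi_nhds.2 fun x => h x x.2)
    (Eventually.of_forall fun k => lipschitzOnWith_iff_restrict.1 (hF k))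

theorem LipschitzOnWith.exists_lipschitzOnWith_inner {E : Type*} [NormedAddCommGroup E]
    [InnerProductSpace ℝ E] {α : Type*} [PseudoMetricSpace α] {s : Set α} (hs : IsCompact s)
    {f g : α → E} {Kf Kg : ℝ≥0} (hf : LipschitzOnWith Kf f s) (hg : LipschitzOnWith Kg g s) :
    ∃ K, LipschitzOnWith K (fun x => ⟪f x, g x⟫) s := by
  have hfg := hf.prodMk hg
  obtain ⟨K, hK⟩ := (contDiff_inner (E := E) (𝕜 := ℝ) (n := 1)).locallyLipschitz.locallyLipschitzOn
    |>.exists_lipschitzOnWith_of_compact (hs.image_of_continuousOn hfg.continuousOn)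
  exact ⟨_, hK.comp hfg (mapsTo_image _ _)⟩

section NormedSpace

variable {F : Type*} [NormedAddCommGroup F] [NormedSpace ℝ F] {f : ℝ → F} {a b : ℝ} {L : ℝ≥0}

theorem LipschitzOnWith.ae_norm_deriv_le (hf : LipschitzOnWith L f (uIcc a b)) :
    ∀ᵐ t, t ∈ Ι a b → ‖deriv f t‖ ≤ L := by
  have hmax : ∀ᵐ t, t ≠ max a b := by simp [ae_iff, measure_singleton]
  filter_upwards [hmax] with t hne ht
  rw [uIoc, mem_Ioc] at ht
  exact norm_deriv_le_of_lipschitzOn (Icc_mem_nhds ht.1 (lt_of_le_of_ne ht.2 hne)) hf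

theorem LipschitzOnWith.ae_differentiableAt_of_mem_uIcc [FiniteDimensional ℝ F]
    (hf : LipschitzOnWith L f (uIcc a b)) : ∀ᵐ t, t ∈ uIcc a b → DifferentiableAt ℝ f t :=
  hf.absolutelyContinuousOnInterval.boundedVariationOn.ae_differentiableAt_of_mem_uIcc

end NormedSpace

section InnerProductSpace

variable {E : Type*} [NormedAddCommGroup E] [InnerProductSpace ℝ E] {a b : ℝ} {L : ℝ≥0}

theorem LipschitzOnWith.intervalIntegrable_inner_deriv [CompleteSpace E] {u f : ℝ → E}
    (hu : ContinuousOn u (uIcc a b)) (hf : LipschitzOnWith L f (uIcc a b)) :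
    IntervalIntegrable (fun t => ⟪u t, deriv f t⟫) volume a b := by
  obtain ⟨M, hM⟩ := isCompact_uIcc.exists_bound_of_continuousOn hu
  refine (intervalIntegrable_const (c := M * L)).mono_fun' ?_ ?_
  · exact ((hu.aestronglyMeasurable measurableSet_uIcc).mono_set uIoc_subset_uIcc).inner
      (stronglyMeasurable_deriv f).aestronglyMeasurable
  · rw [EventuallyLE, ae_restrict_iff' measurableSet_uIoc]
    filter_upwards [hf.ae_norm_deriv_le] with t hfL ht
    calc ‖⟪u t, deriv f t⟫‖ ≤ ‖u t‖ * ‖deriv f t‖ := norm_inner_le_norm _ _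
      _ ≤ M * L := mul_le_mul (hM t (uIoc_subset_uIcc ht)) (hfL ht) (norm_nonneg _)
          ((norm_nonneg _).trans (hM t (uIoc_subset_uIcc ht)))

variable {ι : Type*} {l : Filter ι} [l.NeBot]

theorem tendsto_integral_inner_deriv_sub_of_tendstoUniformlyOn [CompleteSpace E]
    {u : ι → ℝ → E} {u₀ : ℝ → E} {f : ι → ℝ → E} (hu : TendstoUniformlyOn u u₀ l (uIcc a b))
    (huc : ∀ k, ContinuousOn (u k) (uIcc a b)) (hf : ∀ k, LipschitzOnWith L (f k) (uIcc a b)) :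
    Tendsto (fun k => (∫ t in a..b, ⟪u k t, deriv (f k) t⟫) - ∫ t in a..b, ⟪u₀ t, deriv (f k) t⟫)
      l (𝓝 0) := by
  have hu₀ : ContinuousOn u₀ (uIcc a b) := hu.continuousOn (Frequently.of_forall huc)
  refine Metric.tendsto_nhds.2 fun ε hε => ?_
  set δ := ε / (L * |b - a| + 1)
  have hδ : 0 < δ := by positivity
  filter_upwards [Metric.tendstoUniformlyOn_iff.1 hu δ hδ] with k hk
  rw [dist_zero_right, ← intervalIntegral.integral_sub
    ((hf k).intervalIntegrable_inner_deriv (huc k)) ((hf k).intervalIntegrable_inner_deriv hu₀)]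
  simp_rw [← inner_sub_left]
  calc ‖∫ t in a..b, ⟪u k t - u₀ t, deriv (f k) t⟫‖ ≤ δ * L * |b - a| := by
        refine intervalIntegral.norm_integral_le_of_norm_le_const_ae ?_
        filter_upwards [(hf k).ae_norm_deriv_le] with t hfL ht
        calc ‖⟪u k t - u₀ t, deriv (f k) t⟫‖ ≤ ‖u k t - u₀ t‖ * ‖deriv (f k) t‖ :=
              norm_inner_le_norm _ _
          _ ≤ δ * L := by
              rw [← dist_eq_norm, dist_comm]
              exact mul_le_mul (hk t (uIoc_subset_uIcc ht)).le (hfL ht) (norm_nonneg _) hδ.le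
    _ = ε * (L * |b - a| / (L * |b - a| + 1)) := by ring
    _ < ε := mul_lt_of_lt_one_right hε ((div_lt_one (by positivity)).2 (lt_add_one _))

variable [FiniteDimensional ℝ E]

theorem LipschitzOnWith.integral_inner_deriv_eq_deriv_inner {p r : ℝ → E} {Lp Lr : ℝ≥0}
    (hp : LipschitzOnWith Lp p (uIcc a b)) (hr : LipschitzOnWith Lr r (uIcc a b)) :
    ∫ t in a..b, ⟪p t, deriv r t⟫ = ⟪p b, r b⟫ - ⟪p a, r a⟫ - ∫ t in a..b, ⟪deriv p t, r t⟫ := by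
  obtain ⟨K, hpr⟩ := hp.exists_lipschitzOnWith_inner isCompact_uIcc hr
  have hderiv : ∀ᵐ t, t ∈ Ι a b →
      ⟪p t, deriv r t⟫ + ⟪deriv p t, r t⟫ = deriv (fun s => ⟪p s, r s⟫) t := by
    filter_upwards [hp.ae_differentiableAt_of_mem_uIcc, hr.ae_differentiableAt_of_mem_uIcc]
      with t hpt hrt ht
    exact ((hpt (uIoc_subset_uIcc ht)).hasDerivAt.inner ℝ
      (hrt (uIoc_subset_uIcc ht)).hasDerivAt).deriv.symm
  have hpr' : IntervalIntegrable (fun t => ⟪deriv p t, r t⟫) volume a b := by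
    simpa only [real_inner_comm] using hp.intervalIntegrable_inner_deriv hr.continuousOn
  rw [eq_sub_iff_add_eq, ← intervalIntegral.integral_add
      (hr.intervalIntegrable_inner_deriv hp.continuousOn) hpr',
    ← hpr.absolutelyContinuousOnInterval.integral_deriv_eq_sub]
  exact intervalIntegral.integral_congr_ae hderiv

theorem tendsto_integral_inner_deriv_of_tendstoUniformlyOn {p q : ℝ → E} {P Q : ι → ℝ → E}
    {Lp Lq : ℝ≥0} (hP : ∀ k, LipschitzOnWith Lp (P k) (uIcc a b))
    (hQ : ∀ k, LipschitzOnWith Lq (Q k) (uIcc a b))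
    (hPp : TendstoUniformlyOn P p l (uIcc a b)) (hQq : TendstoUniformlyOn Q q l (uIcc a b)) :
    Tendsto (fun k => ∫ t in a..b, ⟪P k t, deriv (Q k) t⟫) l
      (𝓝 (∫ t in a..b, ⟪p t, deriv q t⟫)) := by
  have hp : LipschitzOnWith Lp p (uIcc a b) := .of_tendsto hP fun t ht => hPp.tendsto_at ht
  have hq : LipschitzOnWith Lq q (uIcc a b) := .of_tendsto hQ fun t ht => hQq.tendsto_at ht
  have hparts : ∀ r : ℝ → E, ∀ Lr : ℝ≥0, LipschitzOnWith Lr r (uIcc a b) →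
      ∫ t in a..b, ⟪p t, deriv r t⟫ = ⟪p b, r b⟫ - ⟪p a, r a⟫ - ∫ t in a..b, ⟪r t, deriv p t⟫ :=
    fun r Lr hr => by simp_rw [hp.integral_inner_deriv_eq_deriv_inner hr, real_inner_comm (r _)]
  have hends : ∀ x ∈ uIcc a b, Tendsto (fun k => ⟪p x, Q k x⟫) l (𝓝 ⟪p x, q x⟫) :=
    fun x hx => tendsto_const_nhds.inner (hQq.tendsto_at hx)
  have hPdiff := tendsto_integral_inner_deriv_sub_of_tendstoUniformlyOn hPp
    (fun k => (hP k).continuousOn) hQ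
  have hQdiff := tendsto_integral_inner_deriv_sub_of_tendstoUniformlyOn (f := fun _ => p) hQq
    (fun k => (hQ k).continuousOn) (fun _ => hp)
  have hpQ : Tendsto (fun k => ∫ t in a..b, ⟪p t, deriv (Q k) t⟫) l
      (𝓝 (∫ t in a..b, ⟪p t, deriv q t⟫)) := by
    simp_rw [fun k => hparts (Q k) Lq (hQ k), hparts q Lq hq]
    exact ((hends b right_mem_uIcc).sub (hends a left_mem_uIcc)).sub
      (tendsto_sub_nhds_zero_iff.1 hQdiff)
  simpa only [sub_add_cancel, zero_add] using hPdiff.add hpQ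

end InnerProductSpace

theorem integral_inner_deriv_comp_eq_sub_of_fderiv_eq {E F : Type*} [NormedAddCommGroup E]
    [InnerProductSpace ℝ E] [NormedAddCommGroup F] [NormedSpace ℝ F] [FiniteDimensional ℝ F]
    {U : Set F} (hU : IsOpen U) {Q P : F → E} {S : F → ℝ} {K Kc : ℝ≥0} {a b : ℝ}
    (hQ : DifferentiableOn ℝ Q U) (hS : DifferentiableOn ℝ S U) (hSK : LipschitzOnWith K S U)
    (hexact : ∀ x ∈ U, ∀ v, fderiv ℝ S x v = ⟪P x, fderiv ℝ Q x v⟫) {c : ℝ → F}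
    (hc : LipschitzOnWith Kc c (uIcc a b)) (hcU : MapsTo c (uIcc a b) U) :
    ∫ t in a..b, ⟪P (c t), deriv (fun s => Q (c s)) t⟫ = S (c b) - S (c a) := by
  refine (intervalIntegral.integral_congr_ae ?_).trans
    (hSK.comp hc hcU).absolutelyContinuousOnInterval.integral_deriv_eq_sub
  filter_upwards [hc.ae_differentiableAt_of_mem_uIcc] with t hct ht
  have hcd := (hct (uIoc_subset_uIcc ht)).hasDerivAt
  have hx := hcU (uIoc_subset_uIcc ht)
  have hUx := hU.mem_nhds hx
  have hSc : HasDerivAt (S ∘ c) (fderiv ℝ S (c t) (deriv c t)) t :=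
    ((hS _ hx).differentiableAt hUx).hasFDerivAt.comp_hasDerivAt t hcd
  have hQc : HasDerivAt (fun s => Q (c s)) (fderiv ℝ Q (c t) (deriv c t)) t :=
    ((hQ _ hx).differentiableAt hUx).hasFDerivAt.comp_hasDerivAt t hcd
  rw [hSc.deriv, hQc.deriv, hexact _ hx]

theorem lipschitz_exact_brane_line_integral_general (n : ℕ) (U : Set (EuclideanSpace ℝ (Fin n)))
    (hU : IsOpen U) (K : ℝ≥0)
    (Q P : EuclideanSpace ℝ (Fin n) → EuclideanSpace ℝ (Fin n))
    (S : EuclideanSpace ℝ (Fin n) → ℝ)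
    (Qk Pk : ℕ → EuclideanSpace ℝ (Fin n) → EuclideanSpace ℝ (Fin n))
    (Sk : ℕ → EuclideanSpace ℝ (Fin n) → ℝ)
    (hC1 : ∀ k, ContDiffOn ℝ 1 (fun x => (Qk k x, Pk k x)) U)
    (hS1 : ∀ k, ContDiffOn ℝ 1 (Sk k) U)
    (hιLip : ∀ k, LipschitzOnWith K (fun x => (Qk k x, Pk k x)) U)
    (hSLip : ∀ k, LipschitzOnWith K (Sk k) U)
    (hexact : ∀ k, ∀ x ∈ U, ∀ v,
      fderiv ℝ (Sk k) x v = ⟪Pk k x, fderiv ℝ (Qk k) x v⟫)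
    (hιconv : TendstoUniformlyOn (fun k x => (Qk k x, Pk k x)) (fun x => (Q x, P x)) atTop U)
    (hSconv : TendstoUniformlyOn Sk S atTop U)
    (c : ℝ → EuclideanSpace ℝ (Fin n)) (Kc : ℝ≥0)
    (hc : LipschitzOnWith Kc c (Set.Icc 0 1))
    (hcU : ∀ t ∈ Set.Icc (0 : ℝ) 1, c t ∈ U) :
    ∫ t in (0 : ℝ)..1, ⟪P (c t), deriv (fun s => Q (c s)) t⟫ = S (c 1) - S (c 0) := by
  rw [← uIcc_of_le zero_le_one] at hc hcU
  have hQk k : LipschitzOnWith K (Qk k) U := by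
    simpa [Function.comp_def] using LipschitzWith.prod_fst.comp_lipschitzOnWith (hιLip k)
  have hPk k : LipschitzOnWith K (Pk k) U := by
    simpa [Function.comp_def] using LipschitzWith.prod_snd.comp_lipschitzOnWith (hιLip k)
  have hQ : TendstoUniformlyOn Qk Q atTop U := uniformContinuous_fst.comp_tendstoUniformlyOn hιconv
  have hP : TendstoUniformlyOn Pk P atTop U := uniformContinuous_snd.comp_tendstoUniformlyOn hιconv
  have hlim := tendsto_integral_inner_deriv_of_tendstoUniformlyOn
    (fun k => (hPk k).comp hc hcU) (fun k => (hQk k).comp hc hcU)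
    ((hP.comp c).mono hcU) ((hQ.comp c).mono hcU)
  have hintegral k := integral_inner_deriv_comp_eq_sub_of_fderiv_eq hU
    ((hC1 k).differentiableOn one_ne_zero).fst ((hS1 k).differentiableOn one_ne_zero) (hSLip k)
    (hexact k) hc hcU
  exact tendsto_nhds_unique (hlim.congr hintegral)
    ((hSconv.tendsto_at (hcU _ right_mem_uIcc)).sub (hSconv.tendsto_at (hcU _ left_mem_uIcc)))

/-- For a Lipschitz-exact Lagrangian brane, the line integral of the
Liouville form `θ` along `ι ∘ c` for any Lipschitz curve `c : [0,1] → U` equals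
`S(c 1) - S(c 0)`. -/
theorem lipschitz_exact_brane_line_integral (n : ℕ) (U : Set (EuclideanSpace ℝ (Fin n)))
    (hU : IsOpen U) (K : ℝ≥0) (hK : 0 < K)
    (Q P : EuclideanSpace ℝ (Fin n) → EuclideanSpace ℝ (Fin n))
    (S : EuclideanSpace ℝ (Fin n) → ℝ)
    (Qk Pk : ℕ → EuclideanSpace ℝ (Fin n) → EuclideanSpace ℝ (Fin n))
    (Sk : ℕ → EuclideanSpace ℝ (Fin n) → ℝ)
    (hC1 : ∀ k, ContDiffOn ℝ 1 (fun x => (Qk k x, Pk k x)) U)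
    (hS1 : ∀ k, ContDiffOn ℝ 1 (Sk k) U)
    (hιLip : ∀ k, LipschitzOnWith K (fun x => (Qk k x, Pk k x)) U)
    (hSLip : ∀ k, LipschitzOnWith K (Sk k) U)
    (hexact : ∀ k, ∀ x ∈ U, ∀ v,
      fderiv ℝ (Sk k) x v = ⟪Pk k x, fderiv ℝ (Qk k) x v⟫)
    (hιconv : TendstoUniformlyOn (fun k x => (Qk k x, Pk k x)) (fun x => (Q x, P x)) atTop U)
    (hSconv : TendstoUniformlyOn Sk S atTop U)
    (c : ℝ → EuclideanSpace ℝ (Fin n)) (Kc : ℝ≥0)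
    (hc : LipschitzOnWith Kc c (Set.Icc 0 1))
    (hcU : ∀ t ∈ Set.Icc (0 : ℝ) 1, c t ∈ U) :
    ∫ t in (0 : ℝ)..1, ⟪P (c t), deriv (fun s => Q (c s)) t⟫ = S (c 1) - S (c 0) :=
  lipschitz_exact_brane_line_integral_general n U hU K Q P S Qk Pk Sk hC1 hS1 hιLip hSLip hexact
    hιconv hSconv c Kc hc hcU
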